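/- arXiv:2106.05274 — 2 statements merged into one kernel-verified Lean document; each statement's English description precedes it below -/
import Mathlib

section
/- Let d ≥ 1 and let α be an integer n-cochain and β an integer m-cochain on the d-dimensional hypercube, with n + m + 1 ≤ d. Then δ(α ∪' β) = (δα) ∪' β − (−1)^n α ∪' (δβ), as an equality of integer cochains. -/
/-- The three possible entries of a cell label of the hypercube:
`dot` = `•` (a spanned direction), `pls` = `+`, `mns` = `−`. -/
inductive Sgn : Type
  | dot : Sgn
  | pls : Sgn
  | mns : Sgn
  deriving DecidableEq

instance instFintypeSgn : Fintype Sgn :=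
  ⟨{Sgn.dot, Sgn.pls, Sgn.mns}, fun x => by cases x <;> simp⟩

/-- A cell of the `d`-dimensional hypercube, labeled by a tuple in `{•,+,−}^d`. -/
abbrev Cell (d : ℕ) := Fin d → Sgn

/-- A `ℤ₂`-cochain on the `d`-dimensional hypercube. -/
abbrev Cochain (d : ℕ) := Cell d → ZMod 2

/-- The top cell `(•,…,•)`. -/
def topCell (d : ℕ) : Cell d := fun _ => Sgn.dot

/-- The set of coordinates of a cell labeled `•`. -/
def dots {d : ℕ} (w : Cell d) : Finset (Fin d) :=
  Finset.univ.filter (fun j => w j = Sgn.dot)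

/-- The coboundary of a `ℤ₂`-cochain: `(δα)(w)` is the sum of `α` over all cells obtained
from `w` by replacing exactly one entry equal to `•` by `+` or by `−`. -/
def delta {d : ℕ} (α : Cochain d) : Cochain d := fun w =>
  ∑ j ∈ dots w, (α (Function.update w j Sgn.pls) + α (Function.update w j Sgn.mns))

/-- The set of coordinates where both `z` and `z'` are `•`. -/
def bothDot {d : ℕ} (z z' : Cell d) : Finset (Fin d) :=
  Finset.univ.filter (fun j => z j = Sgn.dot ∧ z' j = Sgn.dot)

/-- The allowed values of `(z_j, z'_j)` at a coordinate `j` not in the common-`•` set `I`: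
`(+,•)` or `(•,−)` when `ℓ(j) = #{i ∈ I : i < j}` is even, and `(−,•)` or `(•,+)` when it
is odd. -/
def pairCond {d : ℕ} (I : Finset (Fin d)) (j : Fin d) (a b : Sgn) : Prop :=
  if (I.filter (fun i => i < j)).card % 2 = 0 then
    (a = Sgn.pls ∧ b = Sgn.dot) ∨ (a = Sgn.dot ∧ b = Sgn.mns)
  else
    (a = Sgn.mns ∧ b = Sgn.dot) ∨ (a = Sgn.dot ∧ b = Sgn.pls)

/-- The pairs `(z,z')` appearing in the `m`-th higher cup product evaluated on the cell `w`:
the entries of `w` equal to `+` or `−` are fixed in both arguments, there are exactly `m`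
coordinates where both `z` and `z'` are `•`, and at the remaining `•`-coordinates of `w`
the parity condition `pairCond` holds. -/
def IntPair {d : ℕ} (m : ℕ) (w z z' : Cell d) : Prop :=
  (∀ j, w j ≠ Sgn.dot → z j = w j ∧ z' j = w j) ∧
    (bothDot z z').card = m ∧
    ∀ j, w j = Sgn.dot → j ∉ bothDot z z' → pairCond (bothDot z z') j (z j) (z' j)

open Classical in
/-- The finite set of pairs in `Int_m` relative to the cell `w`. -/
noncomputable def intPairs {d : ℕ} (m : ℕ) (w : Cell d) : Finset (Cell d × Cell d) :=
  Finset.univ.filter (fun p => IntPair m w p.1 p.2)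

/-- The higher cup product `α ∪_m β` of `ℤ₂`-cochains:
`(α ∪_m β)(w) = Σ_{(z,z') ∈ Int_m(w)} α(z)·β(z')`. -/
noncomputable def cup {d : ℕ} (m : ℕ) (α β : Cochain d) : Cochain d := fun w =>
  ∑ p ∈ intPairs m w, α p.1 * β p.2

/-- An integer cochain on the `d`-dimensional hypercube. -/
abbrev ICochain (d : ℕ) := Cell d → ℤ

/-- The integer coboundary with the cubical sign convention: on a cell whose `•` entries
occur at positions `j_1 < ⋯ < j_n`,
`(δα)(w) = Σ_{ℓ=1}^{n} [(−1)^{ℓ+1} α(w[j_ℓ ↦ +]) + (−1)^{ℓ} α(w[j_ℓ ↦ −])]`,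
where `ℓ` is the rank `#{i ∈ dots w : i ≤ j_ℓ}` of the position. -/
def idelta {d : ℕ} (α : ICochain d) : ICochain d := fun w =>
  ∑ j ∈ dots w,
    ((-1 : ℤ) ^ (((dots w).filter (fun i => i ≤ j)).card + 1)
        * α (Function.update w j Sgn.pls)
      + (-1 : ℤ) ^ ((dots w).filter (fun i => i ≤ j)).card
        * α (Function.update w j Sgn.mns))

/-- The number of `+` entries of a tuple. -/
def nPlus {d : ℕ} (z : Cell d) : ℕ := (Finset.univ.filter (fun j => z j = Sgn.pls)).card

/-- The number of "inversion" pairs `(x, y) ∈ X × Y` with `y < x`; summing these over the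
three pairs of blocks computes the sign of the permutation sending `(1,…,d)` to the
concatenation of the sorted blocks. -/
def inv2 {d : ℕ} (X Y : Finset (Fin d)) : ℕ := ((X ×ˢ Y).filter (fun p => p.2 < p.1)).card

/-- The positions `b_1 < ⋯ < b_n` (among the `•`-entries of the evaluation cell `w`)
where `z'` is `+` or `−`. -/
def bSet {d : ℕ} (w z' : Cell d) : Finset (Fin d) := (dots w).filter (fun j => z' j ≠ Sgn.dot)

/-- The positions `a_1 < ⋯ < a_{d−n−k}` (among the `•`-entries of the evaluation cell `w`)
where `z` is `+` or `−`. -/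
def aSet {d : ℕ} (w z : Cell d) : Finset (Fin d) := (dots w).filter (fun j => z j ≠ Sgn.dot)

/-- The sign `(−1)^s = (−1)^{N_+}·sgn(π)` attached to a pair `(z,z')`, where `N_+` is the
total number of `+` entries among `z` and `z'` and `sgn(π)` is the sign of the permutation
sending `(1,…,d)` to `(i_1,…,i_k, b_1,…,b_n, a_1,…,a_{d−n−k})`, computed as `(−1)` to the
number of inversions of that concatenation. -/
def icupSign {d : ℕ} (w z z' : Cell d) : ℤ :=
  (-1 : ℤ) ^ (nPlus z + nPlus z'
    + inv2 (bothDot z z') (bSet w z') + inv2 (bothDot z z') (aSet w z)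
    + inv2 (bSet w z') (aSet w z))

/-- The integer higher cup product `α ∪'_k β`:
`(α ∪'_k β)(w) = Σ_{(z,z') ∈ Int_k(w)} (−1)^s α(z) β(z')`. -/
noncomputable def icup {d : ℕ} (k : ℕ) (α β : ICochain d) : ICochain d := fun w =>
  ∑ p ∈ intPairs k w, icupSign w p.1 p.2 * α p.1 * β p.2

/-- `α` is an integer `p`-cochain: it vanishes outside `p`-cells. -/
def IsICochainOfDeg {d : ℕ} (p : ℕ) (α : ICochain d) : Prop :=
  ∀ w : Cell d, (dots w).card ≠ p → α w = 0

/-!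
On a cell `w` with `•`-positions `D`, the pairs of `Int_0(w)` are indexed by the subsets
`S ⊆ D`: the first member is `+` on `S` and `•` on `D \ S`, the second is `•` on `S` and `−` on
`D \ S`. Expanding the coboundaries, all three terms of the Leibniz rule become sums over a
position `j ∈ D` and a subset `S ⊆ D \ {j}`, and the identity holds summand by summand. The
faces of `δ(α ∪' β)` match those of `(δα) ∪' β` and `α ∪' (δβ)` in which `j` is moved into
the first, resp. second, factor; the remaining term of `(δα) ∪' β` (the `+`-face of the first
factor) cancels the `−`-face term of `α ∪' (δβ)`. Every sign comparison is a parity count of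
inversions, and the last one needs `(−1)^n` to be the parity of the number of `•`-positions of
the first factor, which holds whenever `α` does not vanish there.
-/

open Finset Function

namespace Finset

section Powerset

variable {ι M : Type*} [DecidableEq ι] [AddCommMonoid M]

lemma sum_powerset_sum_sdiff (D : Finset ι) (f : Finset ι → ι → M) :
    ∑ S ∈ D.powerset, ∑ j ∈ D \ S, f S j = ∑ j ∈ D, ∑ S ∈ (D.erase j).powerset, f S j :=
  sum_comm' fun S j => by simp only [mem_powerset, mem_sdiff, subset_erase]; tauto

lemma sum_powerset_sum_mem (D : Finset ι) (f : Finset ι → ι → M) :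
    ∑ T ∈ D.powerset, ∑ j ∈ T, f T j
      = ∑ j ∈ D, ∑ S ∈ (D.erase j).powerset, f (insert j S) j := by
  have hinj (j : ι) : Set.InjOn (insert j) ((D.erase j).powerset : Set (Finset ι)) :=
    insert_erase_invOn.2.injOn.mono fun S hS => (subset_erase.1 (mem_powerset.1 hS)).2
  calc ∑ T ∈ D.powerset, ∑ j ∈ T, f T j
      = ∑ j ∈ D, ∑ T ∈ (D.erase j).powerset.image (insert j), f T j := by
        refine sum_comm' fun T j => ?_
        simp only [mem_powerset, mem_image, subset_erase]
        constructor
        · rintro ⟨hT, hj⟩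
          exact ⟨⟨T.erase j, ⟨(erase_subset j T).trans hT, notMem_erase j T⟩, insert_erase hj⟩,
            hT hj⟩
        · rintro ⟨⟨S, ⟨hS, -⟩, rfl⟩, hj⟩
          exact ⟨insert_subset hj hS, mem_insert_self j S⟩
    _ = _ := sum_congr rfl fun j _ => sum_image (hinj j)

end Powerset

variable {ι : Type*} [LinearOrder ι] {A D S : Finset ι} {j : ι}

lemma card_filter_insert_le_self (hj : j ∉ A) :
    #{i ∈ insert j A | i ≤ j} = #{i ∈ A | i < j} + 1 := by
  rw [filter_insert, if_pos le_rfl, card_insert_of_notMem (by simp [hj])]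
  congr 2
  exact filter_congr fun i hi => (ne_of_mem_of_not_mem hi hj).le_iff_lt

lemma card_filter_lt_add_card_filter_gt (hj : j ∉ A) :
    #{i ∈ A | i < j} + #{i ∈ A | j < i} = #A := by
  conv_rhs => rw [← card_filter_add_card_filter_not (s := A) (· < j)]
  congr 2
  exact filter_congr fun i hi => by
    rw [not_lt, lt_iff_le_and_ne]; exact and_iff_left (ne_of_mem_of_not_mem hi hj).symm

lemma card_filter_le_eq_of_subset_erase (hj : j ∈ D) (hS : S ⊆ D.erase j) :
    #{i ∈ D | i ≤ j} = #{i ∈ D \ insert j S | i < j} + #{i ∈ S | i < j} + 1 := by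
  have hjS : j ∉ S := (subset_erase.1 hS).2
  have hD : D = insert j (D \ insert j S ∪ S) := by
    rw [← union_insert, sdiff_union_of_subset (insert_subset hj (hS.trans (erase_subset j D)))]
  have hdisj : Disjoint (D \ insert j S) S :=
    disjoint_sdiff_self_left.mono_right (subset_insert j S)
  conv_lhs => rw [hD]
  rw [card_filter_insert_le_self (by simp [hjS]), filter_union,
    card_union_of_disjoint (disjoint_filter_filter hdisj)]

end Finset

section Inversions

variable {d : ℕ}

lemma inv2_eq_sum (X Y : Finset (Fin d)) : inv2 X Y = ∑ x ∈ X, #{y ∈ Y | y < x} := by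
  rw [inv2, card_filter, sum_product]
  exact sum_congr rfl fun x _ => (card_filter _ _).symm

lemma inv2_insert_left {X : Finset (Fin d)} {j : Fin d} (hj : j ∉ X) (Y : Finset (Fin d)) :
    inv2 (insert j X) Y = inv2 X Y + #{y ∈ Y | y < j} := by
  rw [inv2_eq_sum, inv2_eq_sum, sum_insert hj, add_comm]

lemma inv2_insert_right (X : Finset (Fin d)) {Y : Finset (Fin d)} {j : Fin d} (hj : j ∉ Y) :
    inv2 X (insert j Y) = inv2 X Y + #{x ∈ X | j < x} := by
  simp only [inv2_eq_sum, filter_insert, apply_ite card,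
    card_insert_of_notMem (fun h => hj (mem_filter.1 h).1)]
  rw [card_filter, ← sum_add_distrib]
  exact sum_congr rfl fun x _ => by split_ifs <;> rfl

end Inversions

section CupSign

variable {d : ℕ}

/-- The sign `(-1)^s` of the `∪'` pair on a cell with `•`-set `D` whose first member is `+`
exactly on `S` (the `N_+` of the cell itself only contributes an even number). -/
def cupSign (D S : Finset (Fin d)) : ℤ := (-1) ^ (#S + inv2 (D \ S) S)

variable {D S : Finset (Fin d)} {j : Fin d}

lemma cupSign_erase_mul_eq_cupSign_mul (hj : j ∈ D) (hS : S ⊆ D.erase j) :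
    cupSign (D.erase j) S * (-1) ^ #{i ∈ D | i ≤ j}
      = cupSign D S * (-1) ^ #{i ∈ D \ S | i ≤ j} := by
  have hjS : j ∉ S := (subset_erase.1 hS).2
  have hjE : j ∉ D \ insert j S := by simp
  rw [cupSign, cupSign, ← pow_add, ← pow_add, erase_sdiff_comm, ← sdiff_insert,
    ← insert_erase (mem_sdiff.2 ⟨hj, hjS⟩), ← sdiff_insert, inv2_insert_left hjE,
    card_filter_insert_le_self hjE, card_filter_le_eq_of_subset_erase hj hS]
  ring_nf

lemma cupSign_erase_mul_eq_neg_cupSign_insert_mul (hj : j ∈ D) (hS : S ⊆ D.erase j) :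
    cupSign (D.erase j) S * (-1) ^ #{i ∈ D | i ≤ j}
      = -((-1) ^ #(D \ insert j S) * cupSign D (insert j S)
          * (-1) ^ #{i ∈ insert j S | i ≤ j}) := by
  have hjS : j ∉ S := (subset_erase.1 hS).2
  have hjE : j ∉ D \ insert j S := by simp
  rw [cupSign, cupSign, erase_sdiff_comm, ← sdiff_insert, inv2_insert_right _ hjS,
    card_insert_of_notMem hjS, card_filter_insert_le_self hjS,
    card_filter_le_eq_of_subset_erase hj hS, ← card_filter_lt_add_card_filter_gt hjE,
    ← pow_add, ← pow_add, ← pow_add]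
  refine (neg_one_pow_congr ?_).trans ((pow_succ _ _).trans (mul_neg_one _))
  simp only [Nat.even_iff]
  omega

end CupSign

section IntZero

variable {d : ℕ} {w : Cell d} {S : Finset (Fin d)}

def cupFst (w : Cell d) (S : Finset (Fin d)) : Cell d :=
  fun j => if w j = Sgn.dot then (if j ∈ S then Sgn.pls else Sgn.dot) else w j

def cupSnd (w : Cell d) (S : Finset (Fin d)) : Cell d :=
  fun j => if w j = Sgn.dot then (if j ∈ S then Sgn.dot else Sgn.mns) else w j

@[simp]
lemma mem_dots {i : Fin d} : i ∈ dots w ↔ w i = Sgn.dot := by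
  simp [dots]

lemma dots_update (j : Fin d) {s : Sgn} (hs : s ≠ Sgn.dot) :
    dots (update w j s) = (dots w).erase j := by
  ext i
  by_cases hij : i = j
  · subst hij; simp [hs]
  · simp [hij]

lemma dots_cupFst (hS : S ⊆ dots w) : dots (cupFst w S) = dots w \ S := by
  ext i
  have := @hS i
  by_cases hw : w i = Sgn.dot <;> by_cases hi : i ∈ S <;> simp_all [cupFst]

lemma dots_cupSnd (hS : S ⊆ dots w) : dots (cupSnd w S) = S := by
  ext i
  have := @hS i
  by_cases hw : w i = Sgn.dot <;> by_cases hi : i ∈ S <;> simp_all [cupSnd]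

lemma nPlus_cupFst (hS : S ⊆ dots w) : nPlus (cupFst w S) = #S + nPlus w := by
  rw [nPlus, nPlus, ← card_union_of_disjoint]
  · congr 1
    ext i
    have := @hS i
    simp only [mem_filter]
    by_cases hw : w i = Sgn.dot <;> by_cases hi : i ∈ S <;> simp_all [cupFst]
  · exact disjoint_left.2 fun i hi => by simp [mem_dots.1 (hS hi)]

lemma nPlus_cupSnd : nPlus (cupSnd w S) = nPlus w := by
  unfold nPlus
  congr 1
  ext i
  simp only [mem_filter]
  by_cases hw : w i = Sgn.dot <;> by_cases hi : i ∈ S <;> simp [cupSnd, hw, hi]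

lemma bothDot_cupFst_cupSnd : bothDot (cupFst w S) (cupSnd w S) = ∅ := by
  ext i
  simp only [bothDot, mem_filter]
  by_cases hw : w i = Sgn.dot <;> by_cases hi : i ∈ S <;> simp [cupFst, cupSnd, hw, hi]

lemma bSet_cupSnd : bSet w (cupSnd w S) = dots w \ S := by
  ext i
  simp only [bSet, mem_filter]
  by_cases hw : w i = Sgn.dot <;> by_cases hi : i ∈ S <;> simp [cupSnd, hw, hi]

lemma aSet_cupFst (hS : S ⊆ dots w) : aSet w (cupFst w S) = S := by
  ext i
  have := @hS i
  simp only [aSet, mem_filter]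
  by_cases hw : w i = Sgn.dot <;> by_cases hi : i ∈ S <;> simp_all [cupFst]

lemma icupSign_cupFst_cupSnd (hS : S ⊆ dots w) :
    icupSign w (cupFst w S) (cupSnd w S) = cupSign (dots w) S := by
  rw [icupSign, cupSign, nPlus_cupFst hS, nPlus_cupSnd, bothDot_cupFst_cupSnd, bSet_cupSnd,
    aSet_cupFst hS]
  refine neg_one_pow_congr ?_
  simp only [inv2, empty_product, filter_empty, card_empty, Nat.even_iff]
  omega

lemma intPair_zero_iff {z z' : Cell d} :
    IntPair 0 w z z' ↔ ∃ S ⊆ dots w, cupFst w S = z ∧ cupSnd w S = z' := by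
  constructor
  · rintro ⟨hfix, hcard, hpair⟩
    have hBD : bothDot z z' = ∅ := card_eq_zero.1 hcard
    have hdot (i : Fin d) (hi : w i = Sgn.dot) :
        (z i = Sgn.pls ∧ z' i = Sgn.dot) ∨ (z i = Sgn.dot ∧ z' i = Sgn.mns) := by
      simpa [hBD, pairCond] using hpair i hi (by simp [hBD])
    have hz (i : Fin d) : cupFst w (aSet w z) i = z i ∧ cupSnd w (aSet w z) i = z' i := by
      by_cases hi : w i = Sgn.dot
      · rcases hdot i hi with ⟨h, h'⟩ | ⟨h, h'⟩ <;> simp [cupFst, cupSnd, aSet, hi, h, h']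
      · simp [cupFst, cupSnd, hi, hfix i hi]
    exact ⟨aSet w z, filter_subset _ _, funext fun i => (hz i).1, funext fun i => (hz i).2⟩
  · rintro ⟨S, hS, rfl, rfl⟩
    refine ⟨fun i hi => by simp [cupFst, cupSnd, hi], by simp [bothDot_cupFst_cupSnd], ?_⟩
    intro i hi _
    by_cases hiS : i ∈ S <;> simp [bothDot_cupFst_cupSnd, pairCond, cupFst, cupSnd, hi, hiS]

lemma intPairs_zero (w : Cell d) :
    intPairs 0 w = (dots w).powerset.image fun S => (cupFst w S, cupSnd w S) := by
  ext ⟨z, z'⟩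
  simp [intPairs, intPair_zero_iff]

lemma icup_zero_apply (α β : ICochain d) (w : Cell d) :
    icup 0 α β w
      = ∑ S ∈ (dots w).powerset, cupSign (dots w) S * α (cupFst w S) * β (cupSnd w S) := by
  rw [icup, intPairs_zero, sum_image]
  · exact sum_congr rfl fun S hS => by rw [icupSign_cupFst_cupSnd (mem_powerset.1 hS)]
  · intro S₁ hS₁ S₂ hS₂ h
    rw [← aSet_cupFst (mem_powerset.1 hS₁), ← aSet_cupFst (mem_powerset.1 hS₂)]
    exact congrArg (aSet w ∘ Prod.fst) h

end IntZero

section Faces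

variable {d : ℕ} {w : Cell d} {S : Finset (Fin d)} {j : Fin d}

lemma cupFst_update {s : Sgn} (hs : s ≠ Sgn.dot) :
    cupFst (update w j s) S = update (cupFst w S) j s := by
  funext i
  by_cases hij : i = j
  · subst hij; simp [cupFst, hs]
  · simp [cupFst, hij]

lemma cupSnd_update {s : Sgn} (hs : s ≠ Sgn.dot) :
    cupSnd (update w j s) S = update (cupSnd w S) j s := by
  funext i
  by_cases hij : i = j
  · subst hij; simp [cupSnd, hs]
  · simp [cupSnd, hij]

lemma update_cupFst_pls (hj : w j = Sgn.dot) :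
    update (cupFst w S) j Sgn.pls = cupFst w (insert j S) := by
  funext i
  by_cases hij : i = j
  · subst hij; simp [cupFst, hj]
  · simp [cupFst, hij]

lemma update_cupSnd_mns (hj : w j = Sgn.dot) (hjS : j ∉ S) :
    update (cupSnd w S) j Sgn.mns = cupSnd w S :=
  update_eq_self_iff.2 (by simp [cupSnd, hj, hjS])

lemma update_cupSnd_insert (s : Sgn) :
    update (cupSnd w (insert j S)) j s = update (cupSnd w S) j s := by
  funext i
  by_cases hij : i = j
  · subst hij; simp
  · simp [cupSnd, hij]

end Faces

section Expansions

variable {d : ℕ} (α β : ICochain d) (w : Cell d)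

lemma idelta_icup_zero_apply :
    idelta (icup 0 α β) w = ∑ j ∈ dots w, ∑ S ∈ ((dots w).erase j).powerset,
      cupSign ((dots w).erase j) S * (-1) ^ #{i ∈ dots w | i ≤ j} *
        (α (update (cupFst w S) j Sgn.mns) * β (cupSnd w S)
          - α (cupFst w (insert j S)) * β (update (cupSnd w S) j Sgn.pls)) := by
  refine sum_congr rfl fun j hj => ?_
  rw [icup_zero_apply, icup_zero_apply, dots_update j (by simp), dots_update j (by simp),
    mul_sum, mul_sum, ← sum_add_distrib]
  refine sum_congr rfl fun S hS => ?_
  have hjS : j ∉ S := (subset_erase.1 (mem_powerset.1 hS)).2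
  rw [cupFst_update (by simp), cupSnd_update (by simp), cupFst_update (by simp),
    cupSnd_update (by simp), update_cupFst_pls (mem_dots.1 hj),
    update_cupSnd_mns (mem_dots.1 hj) hjS, pow_succ]
  ring

lemma icup_zero_idelta_left_apply :
    icup 0 (idelta α) β w = ∑ j ∈ dots w, ∑ S ∈ ((dots w).erase j).powerset,
      cupSign (dots w) S * (-1) ^ #{i ∈ dots w \ S | i ≤ j} *
        (α (update (cupFst w S) j Sgn.mns) - α (cupFst w (insert j S))) * β (cupSnd w S) := by
  rw [icup_zero_apply, ← sum_powerset_sum_sdiff]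
  refine sum_congr rfl fun S hS => ?_
  rw [idelta, dots_cupFst (mem_powerset.1 hS), mul_sum, sum_mul]
  refine sum_congr rfl fun j hj => ?_
  rw [update_cupFst_pls (mem_dots.1 (mem_sdiff.1 hj).1), pow_succ]
  ring

lemma icup_zero_idelta_right_apply :
    icup 0 α (idelta β) w = ∑ j ∈ dots w, ∑ S ∈ ((dots w).erase j).powerset,
      cupSign (dots w) (insert j S) * (-1) ^ #{i ∈ insert j S | i ≤ j} *
        α (cupFst w (insert j S)) * (β (cupSnd w S) - β (update (cupSnd w S) j Sgn.pls)) := by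
  rw [icup_zero_apply, sum_congr rfl fun T hT => by
    rw [idelta, dots_cupSnd (mem_powerset.1 hT), mul_sum], sum_powerset_sum_mem]
  refine sum_congr rfl fun j hj => sum_congr rfl fun S hS => ?_
  have hjS : j ∉ S := (subset_erase.1 (mem_powerset.1 hS)).2
  rw [update_cupSnd_insert, update_cupSnd_insert, update_cupSnd_mns (mem_dots.1 hj) hjS, pow_succ]
  ring

end Expansions

theorem icup_zero_leibniz_general (d n : ℕ)
    (α β : ICochain d) (hα : IsICochainOfDeg n α) :
    idelta (icup 0 α β) = icup 0 (idelta α) β - ((-1 : ℤ) ^ n) • icup 0 α (idelta β) := by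
  funext w
  rw [Pi.sub_apply, Pi.smul_apply, smul_eq_mul, idelta_icup_zero_apply,
    icup_zero_idelta_left_apply, icup_zero_idelta_right_apply, mul_sum, ← sum_sub_distrib]
  refine sum_congr rfl fun j hj => ?_
  rw [mul_sum, ← sum_sub_distrib]
  refine sum_congr rfl fun S hS => ?_
  replace hS := mem_powerset.1 hS
  have hsign_α : (-1) ^ n * α (cupFst w (insert j S))
      = (-1) ^ #(dots w \ insert j S) * α (cupFst w (insert j S)) := by
    by_cases hn : #(dots w \ insert j S) = n
    · rw [hn]
    · rw [hα _ (by rwa [dots_cupFst (insert_subset hj (hS.trans (erase_subset j _)))]),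
        mul_zero, mul_zero]
  linear_combination
    (α (update (cupFst w S) j Sgn.mns) - α (cupFst w (insert j S))) * β (cupSnd w S)
        * cupSign_erase_mul_eq_cupSign_mul hj hS
      + α (cupFst w (insert j S)) * (β (cupSnd w S) - β (update (cupSnd w S) j Sgn.pls))
        * cupSign_erase_mul_eq_neg_cupSign_insert_mul hj hS
      + cupSign (dots w) (insert j S) * (-1) ^ #{i ∈ insert j S | i ≤ j}
        * (β (cupSnd w S) - β (update (cupSnd w S) j Sgn.pls)) * hsign_α

/-- For `d ≥ 1`, an integer `n`-cochain `α` and an integer `m`-cochain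
`β` on the `d`-dimensional hypercube with `n + m + 1 ≤ d`:
`δ(α ∪' β) = (δα) ∪' β − (−1)^n α ∪' (δβ)`, as an equality of integer cochains
(where `∪' = ∪'₀`). -/
theorem icup_zero_leibniz (d n m : ℕ) (hd : 1 ≤ d) (hnm : n + m + 1 ≤ d)
    (α β : ICochain d) (hα : IsICochainOfDeg n α) (hβ : IsICochainOfDeg m β) :
    idelta (icup 0 α β) = icup 0 (idelta α) β - ((-1 : ℤ) ^ n) • icup 0 α (idelta β) :=
  icup_zero_leibniz_general d n α β hα
end

section
/- Let d ≥ 2, let 1 ≤ i, j ≤ d with i ≠ j, let p₁, p₂ ∈ {0,1}, write ε₁ = (−1)^{p₁}, ε₂ = (−1)^{p₂}, and let σ be the (d−2)-cell of the d-dimensional hypercube whose i-th entry is ε₁, whose j-th entry is ε₂, and whose other entries are all •. Then (𝟙_top ∪_{d−1} δ𝟙_σ)(•,…,•) equals 0 in ℤ₂ if i + j + p₁ + p₂ is even, and equals 1 if i + j + p₁ + p₂ is odd, where 𝟙_top is the indicator cochain of the top cell (•,…,•). -/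
/-- The `(d−1)`-cell `î_s` whose `i`-th entry is `s` and whose other entries are all `•`. -/
def hatCell {d : ℕ} (i : Fin d) (s : Sgn) : Cell d := fun j => if j = i then s else Sgn.dot

/-- `ε(t)`: the sign `+` if `t` is even and `−` if `t` is odd. -/
def eps (t : ℕ) : Sgn := if t % 2 = 0 then Sgn.pls else Sgn.mns

/-- `α` is a `p`-cochain: it vanishes on all cells that are not `p`-cells. -/
def IsCochainOfDeg {d : ℕ} (p : ℕ) (α : Cochain d) : Prop :=
  ∀ w : Cell d, (dots w).card ≠ p → α w = 0

/-- The indicator cochain of a cell: value `1` on that cell and `0` elsewhere. -/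
def indicator {d : ℕ} (c : Cell d) : Cochain d := fun w => if w = c then 1 else 0

/-!
Since `𝟙_top` is supported on the top cell, only the pairs `(top, z')` of `Int_{d-1}` contribute,
and the parity condition forces `z'` to be the `(d-1)`-cell `k̂_{ε(k)}` (1-based `k`), one for each
direction `k`. A coboundary `δ𝟙_σ` is `1` on a cell exactly when `σ` is one of its facets, and the
only cells `k̂_s` having `σ` as a facet are `î_{ε₁}` and `ĵ_{ε₂}`. Hence the value is
`[ε(i) = ε₁] + [ε(j) = ε₂] ≡ i + j + p₁ + p₂ (mod 2)`.
-/

section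

variable {d : ℕ}

lemma eps_ne_dot (t : ℕ) : eps t ≠ Sgn.dot := by
  unfold eps; split <;> simp

lemma eps_eq_eps_iff (a b : ℕ) : eps a = eps b ↔ a % 2 = b % 2 := by
  unfold eps; split_ifs <;> simp <;> omega

lemma ite_eps_eq_eps (a b : ℕ) :
    (if eps a = eps b then 1 else 0 : ZMod 2) = ((a + b + 1 : ℕ) : ZMod 2) := by
  split_ifs with h <;> rw [eps_eq_eps_iff] at h
  · rw [eq_comm, ZMod.natCast_eq_one_iff_odd]; exact Nat.odd_iff.mpr (by omega)
  · rw [eq_comm, ZMod.natCast_eq_zero_iff_even]; exact Nat.even_iff.mpr (by omega)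

lemma bothDot_topCell_left (z : Cell d) : bothDot (topCell d) z = dots z := by
  ext m; simp [bothDot, dots, topCell]

lemma hatCell_apply_self (k : Fin d) (s : Sgn) : hatCell k s k = s := if_pos rfl

lemma dots_hatCell {k : Fin d} {s : Sgn} (hs : s ≠ Sgn.dot) :
    dots (hatCell k s) = Finset.univ.erase k := by
  ext m
  by_cases hm : m = k <;> simp [dots, hatCell, hm, hs]

lemma hatCell_injective_left {k k' : Fin d} {s s' : Sgn} (hs : s ≠ Sgn.dot)
    (h : hatCell k s = hatCell k' s') : k = k' := by
  by_contra hne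
  exact hs (by simpa [hatCell, hne] using congrFun h k)

lemma eq_hatCell_of_dots_eq_erase {z : Cell d} {k : Fin d} (h : dots z = Finset.univ.erase k) :
    z = hatCell k (z k) := by
  funext m
  by_cases hm : m = k
  · subst hm; simp [hatCell]
  · have : m ∈ dots z := by simp [h, hm]
    simpa [dots, hatCell, hm] using this

lemma exists_dots_eq_erase {z : Cell d} (hd : 0 < d) (h : (dots z).card = d - 1) :
    ∃ k, dots z = Finset.univ.erase k := by
  have : (dots z)ᶜ.card = 1 := by
    rw [Finset.card_compl, Fintype.card_fin, h]; omega
  obtain ⟨k, hk⟩ := Finset.card_eq_one.mp this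
  exact ⟨k, by rw [← Finset.compl_singleton, ← hk, compl_compl]⟩

lemma card_filter_lt_erase_self (k : Fin d) :
    ((Finset.univ.erase k).filter (· < k)).card = k.val := by
  have : (Finset.univ.erase k).filter (· < k) = Finset.Iio k := by
    ext m; simpa using ne_of_lt
  rw [this, Fin.card_Iio]

lemma pairCond_erase_self_dot_iff (k : Fin d) (b : Sgn) :
    pairCond (Finset.univ.erase k) k Sgn.dot b ↔ b = eps (k.val + 1) := by
  unfold pairCond eps
  rw [card_filter_lt_erase_self]
  have hsucc : (k.val + 1) % 2 = 1 - k.val % 2 := by omega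
  rcases Nat.mod_two_eq_zero_or_one k.val with h | h <;> simp [h, hsucc]

def IsFacet (σ w : Cell d) : Prop :=
  ∃ j ∈ dots w, ∃ s ≠ Sgn.dot, σ = Function.update w j s

lemma indicator_update_pls_add_mns (σ w : Cell d) (j : Fin d) :
    indicator σ (Function.update w j Sgn.pls) + indicator σ (Function.update w j Sgn.mns) =
      if ∃ s ≠ Sgn.dot, σ = Function.update w j s then 1 else 0 := by
  have hpm : Function.update w j Sgn.pls ≠ Function.update w j Sgn.mns := fun h => by
    simpa using congrFun h j
  unfold indicator
  by_cases hex : ∃ s ≠ Sgn.dot, σ = Function.update w j s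
  · rw [if_pos hex]
    obtain ⟨s, hs, rfl⟩ := hex
    cases s <;> simp_all [eq_comm]
  · rw [if_neg hex, if_neg fun h => hex ⟨_, by simp, h.symm⟩,
      if_neg fun h => hex ⟨_, by simp, h.symm⟩]
    exact add_zero 0

open Classical in
lemma delta_indicator_apply (σ w : Cell d) :
    delta (indicator σ) w = if IsFacet σ w then 1 else 0 := by
  simp only [delta, indicator_update_pls_add_mns]
  split_ifs with h
  · obtain ⟨j, hj, s, hs, rfl⟩ := h
    rw [Finset.sum_eq_single_of_mem j hj]
    · exact if_pos ⟨s, hs, rfl⟩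
    · rintro l hl hlj
      refine if_neg ?_
      rintro ⟨t, ht, heq⟩
      have hl' : w l = Sgn.dot := (Finset.mem_filter.mp hl).2
      have := congrFun heq l
      rw [Function.update_of_ne hlj, hl', Function.update_self] at this
      exact ht this.symm
  · exact Finset.sum_eq_zero fun j hj => if_neg fun ⟨s, hs, heq⟩ => h ⟨j, hj, s, hs, heq⟩

lemma isFacet_hatCell_iff {i j k : Fin d} (hij : i ≠ j) {e₁ e₂ s : Sgn} (h₁ : e₁ ≠ Sgn.dot)
    (h₂ : e₂ ≠ Sgn.dot) (hs : s ≠ Sgn.dot) :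
    IsFacet (fun t => if t = i then e₁ else if t = j then e₂ else Sgn.dot) (hatCell k s) ↔
      (k = i ∧ s = e₁) ∨ (k = j ∧ s = e₂) := by
  constructor
  · rintro ⟨l, hl, t, -, heq⟩
    have hlk : l ≠ k := by simpa [dots_hatCell hs] using hl
    have hk := congrFun heq k
    rw [Function.update_of_ne hlk.symm, hatCell_apply_self] at hk
    by_cases hki : k = i
    · exact Or.inl ⟨hki, by simpa [hki] using hk.symm⟩
    by_cases hkj : k = j
    · subst hkj; exact Or.inr ⟨rfl, by simpa [hki] using hk.symm⟩
    exact absurd (by simpa [hki, hkj] using hk.symm) hs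
  · rintro (⟨rfl, rfl⟩ | ⟨rfl, rfl⟩)
    · refine ⟨j, by simp [dots_hatCell hs, hij.symm], e₂, h₂, funext fun m => ?_⟩
      by_cases hmj : m = j <;> simp [hatCell, hmj, hij.symm]
    · refine ⟨i, by simp [dots_hatCell hs, hij], e₁, h₁, funext fun m => ?_⟩
      by_cases hmi : m = i <;> simp [hatCell, hmi]

lemma delta_indicator_hatCell {i j k : Fin d} (hij : i ≠ j) {e₁ e₂ s : Sgn} (h₁ : e₁ ≠ Sgn.dot)
    (h₂ : e₂ ≠ Sgn.dot) (hs : s ≠ Sgn.dot) :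
    delta (indicator (fun t => if t = i then e₁ else if t = j then e₂ else Sgn.dot)) (hatCell k s) =
      (if k = i ∧ s = e₁ then 1 else 0) + (if k = j ∧ s = e₂ then 1 else 0) := by
  classical
  rw [delta_indicator_apply, if_congr (isFacet_hatCell_iff hij h₁ h₂ hs) rfl rfl]
  by_cases hki : k = i
  · subst hki; simp [hij]
  · simp [hki]

lemma intPair_topCell_iff (hd : 0 < d) (z : Cell d) :
    IntPair (d - 1) (topCell d) (topCell d) z ↔ ∃ k : Fin d, z = hatCell k (eps (k.val + 1)) := by
  simp only [IntPair, bothDot_topCell_left, topCell, ne_eq, not_true_eq_false, false_implies,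
    implies_true, true_and, forall_const]
  constructor
  · rintro ⟨hcard, hpair⟩
    obtain ⟨k, hk⟩ := exists_dots_eq_erase hd hcard
    refine ⟨k, (eq_hatCell_of_dots_eq_erase hk).trans ?_⟩
    have hpair_k := hpair k (by simp [hk])
    rw [hk, pairCond_erase_self_dot_iff] at hpair_k
    rw [hpair_k]
  · rintro ⟨k, rfl⟩
    rw [dots_hatCell (eps_ne_dot _)]
    refine ⟨by simp, fun m hm => ?_⟩
    obtain rfl : m = k := by simpa using hm
    exact (pairCond_erase_self_dot_iff m _).mpr (hatCell_apply_self m _)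

lemma cup_indicator_topCell_apply_topCell (hd : 0 < d) (β : Cochain d) :
    cup (d - 1) (indicator (topCell d)) β (topCell d) =
      ∑ k : Fin d, β (hatCell k (eps (k.val + 1))) := by
  have hpairs : (intPairs (d - 1) (topCell d)).filter (fun p => p.1 = topCell d) =
      Finset.univ.image fun k : Fin d => (topCell d, hatCell k (eps (k.val + 1))) := by
    ext ⟨z, z'⟩
    simp only [intPairs, Finset.mem_filter, Finset.mem_univ, true_and, Finset.mem_image,
      Prod.mk.injEq]
    constructor
    · rintro ⟨hz', rfl⟩
      obtain ⟨k, rfl⟩ := (intPair_topCell_iff hd z').mp hz'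
      exact ⟨k, rfl, rfl⟩
    · rintro ⟨k, rfl, rfl⟩
      exact ⟨(intPair_topCell_iff hd _).mpr ⟨k, rfl⟩, rfl⟩
  have hinj : Function.Injective fun k : Fin d => (topCell d, hatCell k (eps (k.val + 1))) :=
    fun k k' h => hatCell_injective_left (eps_ne_dot _) (congrArg Prod.snd h)
  unfold cup
  rw [← Finset.sum_filter_of_ne (p := fun p => p.1 = topCell d) fun p _ h => by
      by_contra hne; simp [indicator, hne] at h,
    hpairs, Finset.sum_image hinj.injOn]
  simp [indicator]

end

theorem indicator_top_cup_delta_general (d : ℕ) (i j : Fin d) (hij : i ≠ j)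
    (p₁ p₂ : ℕ) :
    (Even ((i.val + 1) + (j.val + 1) + p₁ + p₂) →
      cup (d - 1) (indicator (topCell d))
        (delta (indicator (fun t => if t = i then eps p₁ else if t = j then eps p₂ else Sgn.dot)))
        (topCell d) = 0) ∧
    (¬ Even ((i.val + 1) + (j.val + 1) + p₁ + p₂) →
      cup (d - 1) (indicator (topCell d))
        (delta (indicator (fun t => if t = i then eps p₁ else if t = j then eps p₂ else Sgn.dot)))
        (topCell d) = 1) := by
  have hval : cup (d - 1) (indicator (topCell d))
      (delta (indicator (fun t => if t = i then eps p₁ else if t = j then eps p₂ else Sgn.dot)))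
      (topCell d) = (((i.val + 1) + (j.val + 1) + p₁ + p₂ : ℕ) : ZMod 2) := by
    rw [cup_indicator_topCell_apply_topCell i.pos]
    simp only [delta_indicator_hatCell hij (eps_ne_dot p₁) (eps_ne_dot p₂) (eps_ne_dot _),
      ite_and, Finset.sum_add_distrib, Finset.sum_ite_eq', Finset.mem_univ, if_true,
      ite_eps_eq_eps]
    push_cast
    have h2 : (2 : ZMod 2) = 0 := rfl
    linear_combination h2
  refine ⟨fun h => ?_, fun h => ?_⟩
  · rwa [hval, ZMod.natCast_eq_zero_iff_even]
  · rwa [hval, ZMod.natCast_eq_one_iff_odd, ← Nat.not_even_iff_odd]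

/-- For `d ≥ 2`, `1 ≤ i, j ≤ d` with `i ≠ j` (written `1`-based as
`i.val + 1`, `j.val + 1`), `p₁ p₂ ∈ {0,1}`, `ε₁ = (−1)^{p₁}`, `ε₂ = (−1)^{p₂}`, and `σ` the
`(d−2)`-cell with `i`-th entry `ε₁`, `j`-th entry `ε₂` and all other entries `•`:
`(𝟙_top ∪_{d−1} δ𝟙_σ)(•,…,•)` equals `0` in `ℤ₂` if `i + j + p₁ + p₂` is even, and
equals `1` if `i + j + p₁ + p₂` is odd. -/
theorem indicator_top_cup_delta (d : ℕ) (hd : 2 ≤ d) (i j : Fin d) (hij : i ≠ j)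
    (p₁ p₂ : ℕ) (hp₁ : p₁ ≤ 1) (hp₂ : p₂ ≤ 1) :
    (Even ((i.val + 1) + (j.val + 1) + p₁ + p₂) →
      cup (d - 1) (indicator (topCell d))
        (delta (indicator (fun t => if t = i then eps p₁ else if t = j then eps p₂ else Sgn.dot)))
        (topCell d) = 0) ∧
    (¬ Even ((i.val + 1) + (j.val + 1) + p₁ + p₂) →
      cup (d - 1) (indicator (topCell d))
        (delta (indicator (fun t => if t = i then eps p₁ else if t = j then eps p₂ else Sgn.dot)))
        (topCell d) = 1) :=
  indicator_top_cup_delta_general d i j hij p₁ p₂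
end
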